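/- arXiv:1210.7261 — 2 statements merged into one kernel-verified Lean document; each statement's English description precedes it below -/
import Mathlib

section
/- Let f, g : ℝ³ → ℂ be continuously differentiable functions such that f, g and their gradients ∇f, ∇g are square-integrable on ℝ³. Then the convolution N*(f̄ g), i.e. the function x ↦ ∫_{ℝ³} conj(f(y)) g(y)/(4π|x−y|) dy, is well defined and bounded on ℝ³. -/
open MeasureTheory Real

noncomputable section

/-- Partial derivative in the `j`-th coordinate direction on `ℝ³`. -/
def pd {E : Type*} [NormedAddCommGroup E] [NormedSpace ℝ E]
    (j : Fin 3) (f : EuclideanSpace ℝ (Fin 3) → E)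
    (x : EuclideanSpace ℝ (Fin 3)) : E :=
  fderiv ℝ f x (EuclideanSpace.single j 1)

/-!
Split the Newtonian kernel as `N = N·1_{B(0,1)} + N·1_{B(0,1)ᶜ}`: the first piece lies in
`L^{3/2}` because `|z|^{-3/2}` is integrable near the origin of `ℝ³`, the second is bounded.
By the Sobolev embedding (the Gagliardo–Nirenberg–Sobolev inequality applied to cut-offs of
`f` and `g`, followed by Fatou's lemma) `f, g ∈ L² ∩ L⁶`, so `f̄ g ∈ L¹ ∩ L³`. Hölder's
inequality, together with translation invariance of Lebesgue measure, bounds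
`∫ |f̄ g(y)| N(x - y) dy` by `‖f̄ g‖₃ ‖N·1_B‖_{3/2} + ‖f̄ g‖₁ ‖N·1_{Bᶜ}‖_∞`, uniformly in `x`.
-/

open Set Filter Metric
open scoped ENNReal NNReal Topology

theorem ContinuousLinearMap.eq_sum_smulRight_apply_single {ι F : Type*} [Fintype ι]
    [DecidableEq ι] [NormedAddCommGroup F] [NormedSpace ℝ F]
    (L : EuclideanSpace ℝ ι →L[ℝ] F) :
    L = ∑ j, (EuclideanSpace.proj j).smulRight (L (EuclideanSpace.single j 1)) := by
  ext v
  conv_lhs => rw [← (EuclideanSpace.basisFun ι ℝ).sum_repr v]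
  simp [map_sum, map_smul]

theorem memLp_fderiv_of_forall_memLp_pd {F : Type*} [NormedAddCommGroup F] [NormedSpace ℝ F]
    {u : EuclideanSpace ℝ (Fin 3) → F} {p : ℝ≥0∞} {μ : Measure (EuclideanSpace ℝ (Fin 3))}
    (hu : ∀ j, MemLp (pd j u) p μ) : MemLp (fderiv ℝ u) p μ := by
  let L (j : Fin 3) := ContinuousLinearMap.smulRightL ℝ _ F (EuclideanSpace.proj j)
  have hsum : fderiv ℝ u = fun x => ∑ j, L j (pd j u x) := by
    ext1 x
    rw [(fderiv ℝ u x).eq_sum_smulRight_apply_single]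
    simp [L, pd]
  rw [hsum]
  exact memLp_finsetSum (f := fun j x => L j (pd j u x)) _ fun j _ => (L j).comp_memLp' (hu j)

section Sobolev

variable {E F : Type*} [NormedAddCommGroup E] [NormedSpace ℝ E] [NormedAddCommGroup F]
  [NormedSpace ℝ F]

theorem exists_cutoff_seq [FiniteDimensional ℝ E] :
    ∃ (χ : ℕ → E → ℝ) (D : ℝ), (∀ n, ContDiff ℝ 1 (χ n)) ∧ (∀ n, HasCompactSupport (χ n)) ∧
      (∀ n x, ‖χ n x‖ ≤ 1) ∧ (∀ n x, ‖fderiv ℝ (χ n) x‖ ≤ D) ∧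
      ∀ x, ∀ᶠ n in atTop, χ n x = 1 := by
  let φ : ContDiffBump (0 : E) := ⟨1, 2, one_pos, one_lt_two⟩
  have hφ : ContDiff ℝ 1 φ := φ.contDiff
  obtain ⟨D, hD⟩ := (hφ.continuous_fderiv one_ne_zero).bounded_above_of_compact_support
    (φ.hasCompactSupport.fderiv ℝ)
  have hc (n : ℕ) : (0 : ℝ) < n + 1 := by positivity
  refine ⟨fun n x => φ (((n : ℝ) + 1)⁻¹ • x), D, fun n => hφ.comp (contDiff_const_smul _),
    fun n => φ.hasCompactSupport.comp_smul (inv_ne_zero (hc n).ne'),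
    fun n x => by simpa [abs_of_nonneg φ.nonneg] using φ.le_one, fun n x => ?_, fun x => ?_⟩
  · rw [fderiv_comp_smul, norm_smul, norm_inv, norm_of_nonneg (hc n).le]
    exact (mul_le_of_le_one_left (norm_nonneg _) (inv_le_one_of_one_le₀ (by simp))).trans (hD _)
  · filter_upwards [eventually_ge_atTop ⌈‖x‖⌉₊] with n hn
    refine φ.one_of_mem_closedBall ?_
    rw [mem_closedBall_zero_iff, norm_smul, norm_inv, norm_of_nonneg (hc n).le,
      inv_mul_le_iff₀ (hc n)]
    have := Nat.ceil_le.1 hn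
    show ‖x‖ ≤ (n + 1) * 1
    linarith

theorem norm_fderiv_smul_le {χ : E → ℝ} {u : E → F} {x : E} {D : ℝ}
    (hχ : DifferentiableAt ℝ χ x) (hu : DifferentiableAt ℝ u x) (hχ₁ : ‖χ x‖ ≤ 1)
    (hD : ‖fderiv ℝ χ x‖ ≤ D) :
    ‖fderiv ℝ (fun y => χ y • u y) x‖ ≤ ‖fderiv ℝ u x‖ + D * ‖u x‖ := by
  rw [fderiv_fun_smul hχ hu]
  refine (norm_add_le _ _).trans (add_le_add ?_ ?_)
  · exact (norm_smul_le (χ x) (fderiv ℝ u x)).trans (mul_le_of_le_one_left (norm_nonneg _) hχ₁)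
  · rw [ContinuousLinearMap.norm_smulRight_apply]
    gcongr

theorem ContDiff.memLp_of_memLp_fderiv [FiniteDimensional ℝ E]
    [MeasurableSpace E] [BorelSpace E] {μ : Measure E} [μ.IsAddHaarMeasure]
    [FiniteDimensional ℝ F] {u : E → F} (hu : ContDiff ℝ 1 u) {p p' : ℝ≥0} (hp : 1 ≤ p)
    (hn : 0 < Module.finrank ℝ E) (hp' : (p' : ℝ)⁻¹ = p⁻¹ - (Module.finrank ℝ E : ℝ)⁻¹)
    (hup : MemLp u p μ) (hdu : MemLp (fderiv ℝ u) p μ) : MemLp u p' μ := by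
  obtain ⟨χ, D, hχ, hχK, hχ₁, hχD, hχ_lim⟩ := exists_cutoff_seq (E := E)
  set B := eLpNorm (fderiv ℝ u) p μ + ‖D‖ₑ * eLpNorm u p μ
  have hcut (n : ℕ) : ContDiff ℝ 1 (fun x => χ n x • u x) := (hχ n).smul hu
  have hderiv (n : ℕ) : eLpNorm (fderiv ℝ (fun x => χ n x • u x)) p μ ≤ B := by
    calc _ ≤ eLpNorm (fun x => ‖fderiv ℝ u x‖ + D * ‖u x‖) p μ :=
          eLpNorm_mono_real fun x => norm_fderiv_smul_le ((hχ n).differentiable one_ne_zero x)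
            (hu.differentiable one_ne_zero x) (hχ₁ n x) (hχD n x)
      _ ≤ eLpNorm (fun x => ‖fderiv ℝ u x‖) p μ + eLpNorm (fun x => D * ‖u x‖) p μ :=
          eLpNorm_add_le hdu.1.norm (hup.1.norm.const_mul D) (by exact_mod_cast hp)
      _ = B := by
          rw [eLpNorm_norm, show (fun x => D * ‖u x‖) = D • fun x => ‖u x‖ from rfl,
            eLpNorm_const_smul, eLpNorm_norm]
  have hcut_le (n : ℕ) : eLpNorm (fun x => χ n x • u x) p' μ
      ≤ SNormLESNormFDerivOfEqConst F μ p * B :=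
    (eLpNorm_le_eLpNorm_fderiv_of_eq μ (hcut n) (hχK n).smul_right hp hn hp').trans
      (by gcongr; exact hderiv n)
  have hcut_lim (x : E) : Tendsto (fun n => χ n x • u x) atTop (𝓝 (u x)) :=
    tendsto_nhds_of_eventually_eq ((hχ_lim x).mono fun n hn => by simp [hn])
  refine ⟨hu.continuous.aestronglyMeasurable, ?_⟩
  calc eLpNorm u p' μ ≤ atTop.liminf fun n => eLpNorm (fun x => χ n x • u x) p' μ :=
        Lp.eLpNorm_lim_le_liminf_eLpNorm (fun n => (hcut n).continuous.aestronglyMeasurable) u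
          (.of_forall hcut_lim)
    _ ≤ SNormLESNormFDerivOfEqConst F μ p * B := liminf_le_of_frequently_le' (.of_forall hcut_le)
    _ < ∞ := by
        have := hdu.eLpNorm_lt_top
        have := hup.eLpNorm_lt_top
        finiteness

end Sobolev

namespace MeasureTheory

section Kernel

variable {E F : Type*} [NormedAddCommGroup E] [MeasurableSpace E] [NormedAddCommGroup F]
  {μ : Measure E} {k : E → F} {C : ℝ}

theorem memLp_indicator_ball_of_norm_le_mul_inv [NormedSpace ℝ E] [FiniteDimensional ℝ E]
    [BorelSpace E] [μ.IsAddHaarMeasure] {q : ℝ≥0∞} (hq₀ : q ≠ 0) (hq : q ≠ ∞)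
    (hqE : q.toReal < Module.finrank ℝ E) (hk : ∀ z, ‖k z‖ ≤ C * ‖z‖⁻¹)
    (hmeas : AEStronglyMeasurable k μ) (r : ℝ) :
    MemLp ((ball 0 r).indicator k) q μ := by
  have hq' : 0 < q.toReal := ENNReal.toReal_pos hq₀ hq
  have hpow : (fun z => ‖(ball 0 r).indicator k z‖ ^ q.toReal)
      = (ball 0 r).indicator fun z => ‖k z‖ ^ q.toReal :=
    (indicator_comp_of_zero (g := fun a : F => ‖a‖ ^ q.toReal) (by simp [hq'.ne'])).symm
  rw [← integrable_norm_rpow_iff (hmeas.indicator measurableSet_ball) hq₀ hq, hpow,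
    integrable_indicator_iff measurableSet_ball]
  refine integrableOn_ball_of_norm_le_rpow (by exact_mod_cast hq'.trans hqE) (α := q.toReal)
    (C := |C| ^ q.toReal) hqE (.of_forall fun z => ?_)
    (hmeas.norm.aemeasurable.pow_const _).aestronglyMeasurable
  calc ‖‖k z‖ ^ q.toReal‖ = ‖k z‖ ^ q.toReal := by rw [norm_of_nonneg (by positivity)]
    _ ≤ (|C| * ‖z‖⁻¹) ^ q.toReal := by
      gcongr; exact (hk z).trans (by gcongr; exact le_abs_self C)
    _ = |C| ^ q.toReal * ‖z‖ ^ (-q.toReal) := by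
      rw [mul_rpow (abs_nonneg C) (by positivity), inv_rpow (norm_nonneg z),
        rpow_neg (norm_nonneg z)]

theorem memLp_top_indicator_compl_ball_of_norm_le_mul_inv [OpensMeasurableSpace E] {r : ℝ}
    (hr : 0 < r) (hk : ∀ z, ‖k z‖ ≤ C * ‖z‖⁻¹) (hmeas : AEStronglyMeasurable k μ) :
    MemLp ((ball 0 r)ᶜ.indicator k) ∞ μ := by
  refine memLp_top_of_bound (hmeas.indicator measurableSet_ball.compl) (|C| * r⁻¹)
    (.of_forall fun z => ?_)
  by_cases hz : z ∈ (ball (0 : E) r)ᶜ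
  · rw [indicator_of_mem hz]
    have hrz : r ≤ ‖z‖ := by simpa using hz
    calc ‖k z‖ ≤ C * ‖z‖⁻¹ := hk z
      _ ≤ |C| * ‖z‖⁻¹ := by gcongr; exact le_abs_self C
      _ ≤ |C| * r⁻¹ := by gcongr
  · rw [indicator_of_notMem hz, norm_zero]
    positivity

end Kernel

theorem norm_integral_le_of_eLpNorm_one_le {α E : Type*} [MeasurableSpace α] {μ : Measure α}
    [NormedAddCommGroup E] [NormedSpace ℝ E] {F : α → E} {M : ℝ≥0∞}
    (hM : M ≠ ∞) (hF : eLpNorm F 1 μ ≤ M) : ‖∫ y, F y ∂μ‖ ≤ M.toReal := by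
  rw [← toReal_enorm]
  refine ENNReal.toReal_mono hM ((enorm_integral_le_lintegral_enorm F).trans ?_)
  rwa [← eLpNorm_one_eq_lintegral_enorm]

section Convolution

variable {G 𝕜 : Type*} [AddGroup G] [MeasurableSpace G] [MeasurableAdd G] [MeasurableNeg G]
  {μ : Measure G} [μ.IsAddLeftInvariant] [μ.IsNegInvariant] [NormedRing 𝕜] {h k : G → 𝕜}

theorem MemLp.mul_comp_sub {p q : ℝ≥0∞} [ENNReal.HolderTriple p q 1] (hh : MemLp h p μ)
    (hk : MemLp k q μ) (x : G) : MemLp (fun y => h y * k (x - y)) 1 μ :=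
  (hk.comp_measurePreserving (μ.measurePreserving_sub_left x)).mul' hh

theorem eLpNorm_mul_comp_sub_le {p q : ℝ≥0∞} [ENNReal.HolderTriple p q 1]
    (hh : AEStronglyMeasurable h μ) (hk : AEStronglyMeasurable k μ) (x : G) :
    eLpNorm (fun y => h y * k (x - y)) 1 μ ≤ eLpNorm h p μ * eLpNorm k q μ := by
  have hpres := μ.measurePreserving_sub_left x
  have := eLpNorm_le_eLpNorm_mul_eLpNorm'_of_norm (p := p) (q := q) (r := 1) hh
    (hk.comp_measurePreserving hpres) (· * ·) 1 (.of_forall fun y => by simpa using norm_mul_le _ _)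
  rwa [eLpNorm_comp_measurePreserving hk hpres, ENNReal.coe_one, one_mul] at this

theorem integrable_mul_comp_sub_and_exists_norm_integral_le [NormedSpace ℝ 𝕜] {k₁ k₂ : G → 𝕜}
    {p₁ q₁ p₂ q₂ : ℝ≥0∞} [ENNReal.HolderTriple p₁ q₁ 1] [ENNReal.HolderTriple p₂ q₂ 1]
    (hh₁ : MemLp h p₁ μ) (hk₁ : MemLp k₁ q₁ μ) (hh₂ : MemLp h p₂ μ) (hk₂ : MemLp k₂ q₂ μ) :
    (∀ x, Integrable (fun y => h y * (k₁ + k₂) (x - y)) μ) ∧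
      ∃ C, ∀ x, ‖∫ y, h y * (k₁ + k₂) (x - y) ∂μ‖ ≤ C := by
  have hsplit (x : G) : (fun y => h y * (k₁ + k₂) (x - y))
      = (fun y => h y * k₁ (x - y)) + fun y => h y * k₂ (x - y) := by
    ext y
    simp [mul_add]
  have hbound (x : G) : eLpNorm (fun y => h y * (k₁ + k₂) (x - y)) 1 μ
      ≤ eLpNorm h p₁ μ * eLpNorm k₁ q₁ μ + eLpNorm h p₂ μ * eLpNorm k₂ q₂ μ := by
    rw [hsplit]
    refine (eLpNorm_add_le (hh₁.mul_comp_sub hk₁ x).1 (hh₂.mul_comp_sub hk₂ x).1 le_rfl).trans ?_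
    exact add_le_add (eLpNorm_mul_comp_sub_le hh₁.1 hk₁.1 x) (eLpNorm_mul_comp_sub_le hh₂.1 hk₂.1 x)
  refine ⟨fun x => ?_, _, fun x => norm_integral_le_of_eLpNorm_one_le ?_ (hbound x)⟩
  · rw [hsplit, ← memLp_one_iff_integrable]
    exact (hh₁.mul_comp_sub hk₁ x).add (hh₂.mul_comp_sub hk₂ x)
  · exact (ENNReal.add_lt_top.2 ⟨ENNReal.mul_lt_top hh₁.eLpNorm_lt_top hk₁.eLpNorm_lt_top,
      ENNReal.mul_lt_top hh₂.eLpNorm_lt_top hk₂.eLpNorm_lt_top⟩).ne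

end Convolution

end MeasureTheory

instance ENNReal.holderTriple_six_six_three : ENNReal.HolderTriple 6 6 3 :=
  ⟨(ENNReal.toReal_eq_toReal_iff' (by simp) (by simp)).1 (by
    rw [ENNReal.toReal_add (by simp) (by simp)]; norm_num)⟩

instance ENNReal.holderConjugate_three_three_halves : ENNReal.HolderConjugate 3 (3 / 2) :=
  ⟨(ENNReal.toReal_eq_toReal_iff' (by simp) (by simp)).1 (by
    rw [ENNReal.toReal_add (by simp) (by simp)]; norm_num)⟩

local notation "ℝ³" => EuclideanSpace ℝ (Fin 3)

def newtonKernel (z : ℝ³) : ℂ := ((4 * π * ‖z‖ : ℝ) : ℂ)⁻¹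

theorem norm_newtonKernel_le (z : ℝ³) : ‖newtonKernel z‖ ≤ (4 * π)⁻¹ * ‖z‖⁻¹ := by
  rw [newtonKernel, norm_inv, Complex.norm_real, norm_of_nonneg (by positivity), mul_inv]

theorem aestronglyMeasurable_newtonKernel : AEStronglyMeasurable newtonKernel volume :=
  (Complex.measurable_ofReal.comp (by fun_prop)).inv.aestronglyMeasurable

theorem memLp_six_of_contDiff_of_memLp_pd {u : ℝ³ → ℂ} (hu : ContDiff ℝ 1 u) (hu2 : MemLp u 2 volume)
    (hdu : ∀ j, MemLp (pd j u) 2 volume) : MemLp u 6 volume := by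
  have hdim : Module.finrank ℝ ℝ³ = 3 := finrank_euclideanSpace_fin
  exact_mod_cast hu.memLp_of_memLp_fderiv (μ := volume) (p := 2) (p' := 6) (by norm_num)
    (by simp [hdim]) (by rw [hdim]; norm_num) (by exact_mod_cast hu2)
    (by exact_mod_cast memLp_fderiv_of_forall_memLp_pd hdu)

/-- if `f, g : ℝ³ → ℂ` are `C¹` with `f, g, ∇f, ∇g ∈ L²`, then
the convolution `N*(f̄ g)`, `x ↦ ∫ conj(f(y)) g(y)/(4π|x−y|) dy`, is well
defined (the integrand is integrable for each `x`) and bounded on `ℝ³`. -/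
theorem newtonian_potential_of_H1_product_bounded
    (f g : EuclideanSpace ℝ (Fin 3) → ℂ)
    (hf : ContDiff ℝ 1 f) (hg : ContDiff ℝ 1 g)
    (hf2 : MemLp f 2 volume) (hg2 : MemLp g 2 volume)
    (hdf : ∀ j : Fin 3, MemLp (pd j f) 2 volume)
    (hdg : ∀ j : Fin 3, MemLp (pd j g) 2 volume) :
    (∀ x : EuclideanSpace ℝ (Fin 3),
      Integrable (fun y => (starRingEnd ℂ) (f y) * g y / ((4 * π * ‖x - y‖ : ℝ) : ℂ))) ∧
    (∃ C : ℝ, ∀ x : EuclideanSpace ℝ (Fin 3),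
      ‖∫ y, (starRingEnd ℂ) (f y) * g y / ((4 * π * ‖x - y‖ : ℝ) : ℂ)‖ ≤ C) := by
  have hf6 := memLp_six_of_contDiff_of_memLp_pd hf hf2 hdf
  have hg6 := memLp_six_of_contDiff_of_memLp_pd hg hg2 hdg
  have h1 : MemLp (fun y => (starRingEnd ℂ) (f y) * g y) 1 volume := hg2.mul' hf2.star
  have h3 : MemLp (fun y => (starRingEnd ℂ) (f y) * g y) 3 volume := hg6.mul' hf6.star
  have hN₁ : MemLp ((ball 0 1).indicator newtonKernel) (3 / 2) volume :=
    memLp_indicator_ball_of_norm_le_mul_inv (by norm_num) (ENNReal.div_ne_top (by simp) (by simp))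
      (by rw [finrank_euclideanSpace_fin]; norm_num) norm_newtonKernel_le
      aestronglyMeasurable_newtonKernel 1
  have hN₂ : MemLp ((ball 0 1)ᶜ.indicator newtonKernel) ∞ volume :=
    memLp_top_indicator_compl_ball_of_norm_le_mul_inv one_pos norm_newtonKernel_le
      aestronglyMeasurable_newtonKernel
  simpa [indicator_self_add_compl, newtonKernel, div_eq_mul_inv] using
    integrable_mul_comp_sub_and_exists_norm_integral_le h3 hN₁ h1 hN₂
end
end

section
/- Let H be a complex inner product space (inner product conjugate-linear in the first argument), let D ⊆ H be a subspace, and let L₀, L₁ : D → H be linear maps that are symmetric on D (⟨u, Lᵢv⟩ = ⟨Lᵢu, v⟩ for all u, v ∈ D). Suppose R, S ∈ D and λ ∈ ℂ satisfy λR = L₀S and λS = −L₁R, and suppose ⟨S, R⟩ ≠ 0, ⟨S, L₀S⟩ ≥ 0, and ⟨R, L₁R⟩ ≥ 0. Then λ² is real and λ² ≤ 0; i.e. λ is purely imaginary. (This is the key step showing that the point spectrum of the linearization of the Choquard equation at the ground state lies on the imaginary axis, so the ground state solitary wave is linearly stable.) -/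
open scoped ComplexOrder ComplexInnerProductSpace ComplexConjugate

/-!
Write `c = ⟪S, R⟫`. The eigenvalue equations give `⟪S, L₀ S⟫ = λ c` and
`⟪R, L₁ R⟫ = -λ c̄`, whose product `-λ² |c|²` is then nonnegative; as `c ≠ 0`, `λ² ≤ 0`.
-/

namespace Complex

theorem sq_nonpos_of_mul_nonneg_of_neg_mul_conj_nonneg {z c : ℂ} (hc : c ≠ 0)
    (h₁ : 0 ≤ z * c) (h₂ : 0 ≤ -(z * conj c)) : z ^ 2 ≤ 0 := by
  have hprod : 0 ≤ -z ^ 2 * (normSq c : ℂ) :=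
    calc (0 : ℂ) ≤ z * c * -(z * conj c) := mul_nonneg h₁ h₂
      _ = -z ^ 2 * (normSq c : ℂ) := by rw [← mul_conj]; ring
  rw [← neg_nonneg]
  exact le_of_mul_le_mul_right (by rwa [zero_mul]) (zero_lt_real.mpr (normSq_pos.mpr hc))

end Complex

theorem eigenvalue_purely_imaginary_general
    {H : Type*} [NormedAddCommGroup H] [InnerProductSpace ℂ H]
    (D : Submodule ℂ H) (L₀ L₁ : D →ₗ[ℂ] H)
    (R S : D) (lam : ℂ)
    (h₁ : lam • (R : H) = L₀ S) (h₂ : lam • (S : H) = -(L₁ R))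
    (hSR : ⟪(S : H), (R : H)⟫ ≠ 0)
    (hS : 0 ≤ ⟪(S : H), L₀ S⟫) (hR : 0 ≤ ⟪(R : H), L₁ R⟫) :
    lam ^ 2 ≤ 0 ∧ lam.re = 0 := by
  have hS_eq : ⟪(S : H), L₀ S⟫ = lam * ⟪(S : H), (R : H)⟫ := by
    rw [← h₁, inner_smul_right]
  have hR_eq : ⟪(R : H), L₁ R⟫ = -(lam * conj ⟪(S : H), (R : H)⟫) := by
    rw [← neg_eq_iff_eq_neg.mpr h₂, inner_neg_right, inner_smul_right, inner_conj_symm]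
  have hsq : lam ^ 2 ≤ 0 :=
    Complex.sq_nonpos_of_mul_nonneg_of_neg_mul_conj_nonneg hSR (hS_eq ▸ hS) (hR_eq ▸ hR)
  exact ⟨hsq, Complex.sq_nonpos_iff.mp hsq⟩

/-- If `L₀, L₁` are symmetric linear maps on a subspace `D` of a
complex inner product space, `λR = L₀S`, `λS = −L₁R`, `⟨S,R⟩ ≠ 0`,
`⟨S, L₀S⟩ ≥ 0` and `⟨R, L₁R⟩ ≥ 0`, then `λ²` is real with `λ² ≤ 0`, i.e. `λ`
is purely imaginary.  (Key step in the linear stability of the Choquard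
ground state solitary wave.) -/
theorem eigenvalue_purely_imaginary
    {H : Type*} [NormedAddCommGroup H] [InnerProductSpace ℂ H]
    (D : Submodule ℂ H) (L₀ L₁ : D →ₗ[ℂ] H)
    (hL₀sym : ∀ u v : D, ⟪(u : H), L₀ v⟫ = ⟪L₀ u, (v : H)⟫)
    (hL₁sym : ∀ u v : D, ⟪(u : H), L₁ v⟫ = ⟪L₁ u, (v : H)⟫)
    (R S : D) (lam : ℂ)
    (h₁ : lam • (R : H) = L₀ S) (h₂ : lam • (S : H) = -(L₁ R))
    (hSR : ⟪(S : H), (R : H)⟫ ≠ 0)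
    (hS : 0 ≤ ⟪(S : H), L₀ S⟫) (hR : 0 ≤ ⟪(R : H), L₁ R⟫) :
    lam ^ 2 ≤ 0 ∧ lam.re = 0 :=
  eigenvalue_purely_imaginary_general D L₀ L₁ R S lam h₁ h₂ hSR hS hR
end
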